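/- arXiv:2307.12605 — 3 statements merged into one kernel-verified Lean document; each statement's English description precedes it below -/
import Mathlib

section
/- If a lottery q is Pareto-optimal, then its envy graph G(q) is acyclic, where G(q) has vertex set {1,...,n} and an arc (l,h) whenever u_l(q; l) < u_l(q; h). -/
open Finset

/-- A lottery over allocations for a fair division instance with `n` agents and
`m` admissible partitions, each consisting of `n` bundles.  `q k i j` is the
probability that agent `i` receives bundle `j` of partition `k`, and `p k` is
the probability that partition `k` is selected. -/
structure Lottery (n m : ℕ) where
  q : Fin m → Fin n → Fin n → ℝ
  p : Fin m → ℝ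
  q_nonneg : ∀ k i j, 0 ≤ q k i j
  p_nonneg : ∀ k, 0 ≤ p k
  col_sum : ∀ k j, ∑ i, q k i j = p k
  row_sum : ∀ k i, ∑ j, q k i j = p k
  total : ∑ k, p k = 1

/-- Expected utility of agent `i` for the (random) bundle of agent `i'` in a
lottery, with partition-based utilities `u k i j`. -/
def eu {n m : ℕ} (u : Fin m → Fin n → Fin n → ℝ) (L : Lottery n m) (i i' : Fin n) : ℝ :=
  ∑ k, ∑ j, u k i j * L.q k i' j

/-- A lottery is (ex-ante) Pareto-optimal if no lottery weakly improves every
agent's expected utility and strictly improves some agent's. -/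
def ParetoOptimal {n m : ℕ} (u : Fin m → Fin n → Fin n → ℝ) (L : Lottery n m) : Prop :=
  ¬ ∃ L' : Lottery n m, (∀ i, eu u L i i ≤ eu u L' i i) ∧ (∃ i, eu u L i i < eu u L' i i)

lemma exists_cycle_chain {α : Type*} {r : α → α → Prop} {x y : α} (h : Relation.TransGen r x y) :
    ∃ N : ℕ, 0 < N ∧ ∃ a : Fin (N+1) → α, a 0 = x ∧ a (Fin.last N) = y ∧
      ∀ t : Fin N, r (a t.castSucc) (a t.succ) := by
  induction h with
  | single hxy =>
      exact ⟨1, one_pos, ![x, _], rfl, rfl, fun t => by fin_cases t; simpa⟩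
  | tail hxy hr ih =>
      obtain ⟨N, hN, a, h0, hl, ha⟩ := ih
      refine ⟨N+1, by omega, Fin.snoc a _, ?_, Fin.snoc_last .., ?_⟩
      · rw [show (0 : Fin (N+1+1)) = Fin.castSucc 0 from (Fin.castSucc_zero).symm,
          Fin.snoc_castSucc, h0]
      · intro t
        induction t using Fin.lastCases with
        | last =>
            have h1 : (Fin.last N).castSucc = Fin.castSucc (Fin.last N) := rfl
            have h2 : (Fin.last N).succ = Fin.last (N+1) := rfl
            rw [h1, h2, Fin.snoc_castSucc, Fin.snoc_last, hl]
            exact hr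
        | cast t' =>
            have h1 : (t'.castSucc).succ = (t'.succ).castSucc := (Fin.succ_castSucc t').symm
            rw [h1, Fin.snoc_castSucc, Fin.snoc_castSucc]
            exact ha t'

lemma triple_sum_pull {m n N : ℕ} (c : ℝ) (F : Fin m → Fin n → Fin N → ℝ) :
    ∑ k, ∑ j, c * ∑ t, F k j t = c * ∑ t, ∑ k, ∑ j, F k j t := by
  simp only [Finset.mul_sum]
  rw [Finset.sum_congr rfl fun k _ => Finset.sum_comm, Finset.sum_comm]

/-- the envy graph (arc `(l,h)` iff `l` envies `h`) of a
Pareto-optimal lottery is acyclic. -/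
theorem pareto_implies_envy_graph_acyclic {n m : ℕ} (u : Fin m → Fin n → Fin n → ℝ)
    (L : Lottery n m) (hPO : ParetoOptimal u L) :
    ∀ i : Fin n, ¬ Relation.TransGen (fun l h => eu u L l l < eu u L l h) i i := by
  intro i hcyc
  obtain ⟨N, hN, a, h0, hl, ha⟩ := exists_cycle_chain hcyc
  have hNr : (0 : ℝ) < (N : ℝ) := by exact_mod_cast hN
  -- shifting a closed walk leaves sums over its vertices unchanged
  have hshift : ∀ f : Fin n → ℝ, ∑ t : Fin N, f (a t.castSucc) = ∑ t : Fin N, f (a t.succ) := by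
    intro f
    have h1 := Fin.sum_univ_castSucc (f := fun t => f (a t))
    have h2 := Fin.sum_univ_succ (f := fun t => f (a t))
    have h3 : f (a 0) = f (a (Fin.last N)) := by rw [h0, hl]
    linarith
  have hconst : ∀ c : ℝ, (∑ _t : Fin N, c) = (N : ℝ) * c := by
    intro c
    rw [Finset.sum_const, Finset.card_univ, Fintype.card_fin, nsmul_eq_mul]
  -- the shifted allocation probabilities
  set qf : Fin m → Fin n → Fin n → ℝ := fun k i' j =>
      ((N : ℝ))⁻¹ * ∑ t : Fin N,
        (if a t.castSucc = i' then L.q k (a t.succ) j else L.q k i' j) with hqf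
  have hq_nonneg : ∀ k i' j, 0 ≤ qf k i' j := by
    intro k i' j
    refine mul_nonneg (by positivity) (Finset.sum_nonneg fun t _ => ?_)
    split_ifs <;> exact L.q_nonneg _ _ _
  have hrow : ∀ k i', ∑ j, qf k i' j = L.p k := by
    intro k i'
    rw [hqf]
    simp only
    rw [← Finset.mul_sum, Finset.sum_comm]
    have : ∀ t : Fin N, ∑ j, (if a t.castSucc = i' then L.q k (a t.succ) j else L.q k i' j)
        = L.p k := by
      intro t
      by_cases h : a t.castSucc = i' <;> simp [h, L.row_sum]
    rw [Finset.sum_congr rfl fun t _ => this t, hconst]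
    field_simp
  have hcol : ∀ k j, ∑ i', qf k i' j = L.p k := by
    intro k j
    rw [hqf]
    simp only
    rw [← Finset.mul_sum, Finset.sum_comm]
    have inner : ∀ t : Fin N,
        ∑ i', (if a t.castSucc = i' then L.q k (a t.succ) j else L.q k i' j)
        = L.p k - L.q k (a t.castSucc) j + L.q k (a t.succ) j := by
      intro t
      have hpt : ∀ i', (if a t.castSucc = i' then L.q k (a t.succ) j else L.q k i' j)
          = L.q k i' j + (if a t.castSucc = i'
              then L.q k (a t.succ) j - L.q k (a t.castSucc) j else 0) := by
        intro i'; split_ifs with h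
        · rw [← h]; ring
        · ring
      rw [Finset.sum_congr rfl fun i' _ => hpt i', Finset.sum_add_distrib, L.col_sum,
        Finset.sum_ite_eq, if_pos (Finset.mem_univ _)]
      ring
    rw [Finset.sum_congr rfl fun t _ => inner t]
    have e1 : ∑ t : Fin N, (L.p k - L.q k (a t.castSucc) j + L.q k (a t.succ) j)
        = ∑ _t : Fin N, L.p k := by
      rw [Finset.sum_add_distrib, Finset.sum_sub_distrib]
      have hs := hshift (fun x => L.q k x j)
      linarith
    rw [e1, hconst]
    field_simp
  -- the improved lottery
  set L' : Lottery n m :=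
    ⟨qf, L.p, hq_nonneg, L.p_nonneg, hcol, hrow, L.total⟩ with hL'
  have key : ∀ i', eu u L' i' i' = ((N : ℝ))⁻¹ * ∑ t : Fin N,
      (if a t.castSucc = i' then eu u L i' (a t.succ) else eu u L i' i') := by
    intro i'
    show (∑ k, ∑ j, u k i' j * qf k i' j) = _
    rw [hqf]
    simp only
    have e1 : ∀ k j, u k i' j * (((N : ℝ))⁻¹ * ∑ t : Fin N,
        (if a t.castSucc = i' then L.q k (a t.succ) j else L.q k i' j))
        = ((N : ℝ))⁻¹ * ∑ t : Fin N,
          u k i' j * (if a t.castSucc = i' then L.q k (a t.succ) j else L.q k i' j) := by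
      intro k j
      rw [mul_left_comm, Finset.mul_sum]
    simp only [e1]
    rw [triple_sum_pull]
    congr 1
    refine Finset.sum_congr rfl fun t _ => ?_
    by_cases h : a t.castSucc = i'
    · simp only [if_pos h]; rfl
    · simp only [if_neg h]; rfl
  have hterm : ∀ (i' : Fin n) (t : Fin N), eu u L i' i' ≤
      (if a t.castSucc = i' then eu u L i' (a t.succ) else eu u L i' i') := by
    intro i' t
    split_ifs with h
    · have := ha t; rw [h] at this; exact this.le
    · exact le_rfl
  have hbase : ∀ i', eu u L i' i' = ((N : ℝ))⁻¹ * ∑ _t : Fin N, eu u L i' i' := by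
    intro i'
    rw [hconst]
    field_simp
  refine hPO ⟨L', fun i' => ?_, i, ?_⟩
  · calc eu u L i' i' = ((N : ℝ))⁻¹ * ∑ _t : Fin N, eu u L i' i' := hbase i'
      _ ≤ ((N : ℝ))⁻¹ * ∑ t : Fin N,
          (if a t.castSucc = i' then eu u L i' (a t.succ) else eu u L i' i') :=
        mul_le_mul_of_nonneg_left (Finset.sum_le_sum fun t _ => hterm i' t) (by positivity)
      _ = eu u L' i' i' := (key i').symm
  · have ht0 : a (⟨0, hN⟩ : Fin N).castSucc = i := by
      have : (⟨0, hN⟩ : Fin N).castSucc = 0 := by ext; simp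
      rw [this, h0]
    calc eu u L i i = ((N : ℝ))⁻¹ * ∑ _t : Fin N, eu u L i i := hbase i
      _ < ((N : ℝ))⁻¹ * ∑ t : Fin N,
          (if a t.castSucc = i then eu u L i (a t.succ) else eu u L i i) := by
        refine mul_lt_mul_of_pos_left ?_ (by positivity)
        refine Finset.sum_lt_sum (fun t _ => hterm i t) ⟨⟨0, hN⟩, Finset.mem_univ _, ?_⟩
        rw [if_pos ht0]
        have := ha ⟨0, hN⟩
        rwa [ht0] at this
      _ = eu u L' i i := (key i).symm
end

section
/- Let q be an optimal solution of the linear program maximizing ∑_i w_i u_i(q;i) over lotteries, with strictly positive weights w. Fix agents l, h. If w_h ≤ ρ·w_l, where ρ is the instance parameter from Definition of ρ, then u_l(q; l) ≥ u_l(q; h), i.e., agent l does not envy agent h. -/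
open Finset

/-- The instance parameter ρ of Definition 3.2: half the minimum ratio
`(u^k_{lb} − u^k_{la}) / (u^k_{hb} − u^k_{ha})` over all tuples `(k,l,h,a,b)`
where both differences are positive, and `1/2` if there is no such tuple. -/
def rho {n m : ℕ} (u : Fin m → Fin n → Fin n → ℚ) : ℚ :=
  let J : Finset (Fin m × Fin n × Fin n × Fin n × Fin n) :=
    Finset.univ.filter (fun t =>
      u t.1 t.2.1 t.2.2.2.1 < u t.1 t.2.1 t.2.2.2.2 ∧
      u t.1 t.2.2.1 t.2.2.2.1 < u t.1 t.2.2.1 t.2.2.2.2)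
  if h : J.Nonempty then
    (1/2) * J.inf' h (fun t =>
      (u t.1 t.2.1 t.2.2.2.2 - u t.1 t.2.1 t.2.2.2.1) /
      (u t.1 t.2.2.1 t.2.2.2.2 - u t.1 t.2.2.1 t.2.2.2.1))
  else 1/2

/-- Expected utilities for rational-valued partition-based utilities. -/
def euQ {n m : ℕ} (u : Fin m → Fin n → Fin n → ℚ) (L : Lottery n m) (i i' : Fin n) : ℝ :=
  eu (fun k a b => ((u k a b : ℚ) : ℝ)) L i i'

/-! ### Auxiliary lemmas -/

/-- `rho u` is at most half of any ratio appearing in its defining set. -/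
lemma rho_le_half_ratio {n m : ℕ} (u : Fin m → Fin n → Fin n → ℚ)
    (t : Fin m × Fin n × Fin n × Fin n × Fin n)
    (h1 : u t.1 t.2.1 t.2.2.2.1 < u t.1 t.2.1 t.2.2.2.2)
    (h2 : u t.1 t.2.2.1 t.2.2.2.1 < u t.1 t.2.2.1 t.2.2.2.2) :
    rho u ≤ (1/2) * ((u t.1 t.2.1 t.2.2.2.2 - u t.1 t.2.1 t.2.2.2.1) /
      (u t.1 t.2.2.1 t.2.2.2.2 - u t.1 t.2.2.1 t.2.2.2.1)) := by
  have ht : t ∈ Finset.univ.filter (fun t =>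
      u t.1 t.2.1 t.2.2.2.1 < u t.1 t.2.1 t.2.2.2.2 ∧
      u t.1 t.2.2.1 t.2.2.2.1 < u t.1 t.2.2.1 t.2.2.2.2) := by
    simp [h1, h2]
  unfold rho
  dsimp only
  rw [dif_pos ⟨t, ht⟩]
  exact mul_le_mul_of_nonneg_left (Finset.inf'_le _ ht) (by norm_num)

lemma perm_col_sum {n : ℕ} (σ : Equiv.Perm (Fin n)) (j : Fin n) :
    ∑ i, (if σ i = j then (1:ℝ) else 0) = 1 := by
  rw [Fintype.sum_eq_single (σ.symm j)]
  · simp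
  · intro x hx; simp only [ite_eq_right_iff]; intro hc; exact absurd (by simp [← hc]) hx

/-- The modified lottery: in partition `k`, remove `δ` worth of permutation `σ`
and add `δ` worth of permutation `τ`. -/
lemma swap_lottery {n m : ℕ} (L : Lottery n m) (k : Fin m) (σ τ : Equiv.Perm (Fin n))
    (δ : ℝ) (hδ : 0 ≤ δ) (hlow : ∀ i j, δ * (if σ i = j then 1 else 0) ≤ L.q k i j) :
    ∃ L' : Lottery n m, ∀ k' i j, L'.q k' i j = L.q k' i j +
      (if k' = k then δ * ((if τ i = j then (1:ℝ) else 0) - (if σ i = j then 1 else 0)) else 0) := by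
  refine ⟨⟨fun k' i j => L.q k' i j +
      (if k' = k then δ * ((if τ i = j then (1:ℝ) else 0) - (if σ i = j then 1 else 0)) else 0),
      L.p, ?_, L.p_nonneg, ?_, ?_, L.total⟩, fun _ _ _ => rfl⟩
  · intro k' i j
    by_cases hk : k' = k
    · rw [if_pos hk, mul_sub, hk]
      have h1 := hlow i j
      have h2 : 0 ≤ δ * (if τ i = j then (1:ℝ) else 0) := by positivity
      linarith
    · simp [hk, L.q_nonneg]
  · intro k' j
    rw [Finset.sum_add_distrib, L.col_sum]
    by_cases hk : k' = k
    · rw [Finset.sum_congr rfl (fun i _ => if_pos hk),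
        Finset.sum_congr rfl (fun i _ => mul_sub δ _ _),
        Finset.sum_sub_distrib, ← Finset.mul_sum, ← Finset.mul_sum,
        perm_col_sum, perm_col_sum]
      ring
    · simp [hk]
  · intro k' i
    rw [Finset.sum_add_distrib, L.row_sum]
    by_cases hk : k' = k
    · rw [Finset.sum_congr rfl (fun j _ => if_pos hk),
        Finset.sum_congr rfl (fun j _ => mul_sub δ _ _),
        Finset.sum_sub_distrib, ← Finset.mul_sum, ← Finset.mul_sum]
      simp
    · simp [hk]

/-- cf. Claim 4.13 of Cole–Tao: if `q` maximizes the weighted sum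
of expected utilities with strictly positive weights and `w h ≤ ρ * w l`, then
agent `l` does not envy agent `h`. -/
theorem weight_inequality_implies_no_envy {n m : ℕ} (u : Fin m → Fin n → Fin n → ℚ)
    (w : Fin n → ℝ) (hw : ∀ i, 0 < w i) (L : Lottery n m)
    (hopt : ∀ L' : Lottery n m, ∑ i, w i * euQ u L' i i ≤ ∑ i, w i * euQ u L i i)
    (l h : Fin n) (hwlh : w h ≤ ((rho u : ℚ) : ℝ) * w l) :
    euQ u L l h ≤ euQ u L l l := by
  rcases eq_or_ne l h with rfl | hlh
  · exact le_refl _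
  -- it suffices to prove the inequality partition by partition
  unfold euQ eu
  refine Finset.sum_le_sum fun k _ => ?_
  rcases eq_or_lt_of_le (L.p_nonneg k) with hp0 | hp
  · -- degenerate partition: all entries are zero
    have hz : ∀ i j, L.q k i j = 0 := by
      intro i j
      have hr := L.row_sum k i
      rw [← hp0] at hr
      exact (Finset.sum_eq_zero_iff_of_nonneg (fun j _ => L.q_nonneg k i j)).1 hr j (mem_univ j)
    simp [hz]
  -- Birkhoff decomposition of the k-th slice
  set D : Matrix (Fin n) (Fin n) ℝ := Matrix.of (fun i j => L.q k i j / L.p k) with hD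
  have hDmem : D ∈ doublyStochastic ℝ (Fin n) := by
    rw [mem_doublyStochastic_iff_sum]
    refine ⟨fun i j => div_nonneg (L.q_nonneg k i j) hp.le, fun i => ?_, fun j => ?_⟩
    · rw [show (∑ j, D i j) = (∑ j, L.q k i j) / L.p k by rw [Finset.sum_div]; rfl,
        L.row_sum, div_self hp.ne']
    · rw [show (∑ i, D i j) = (∑ i, L.q k i j) / L.p k by rw [Finset.sum_div]; rfl,
        L.col_sum, div_self hp.ne']
  obtain ⟨c, hc0, hc1, hcD⟩ := exists_eq_sum_perm_of_mem_doublyStochastic hDmem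
  -- entrywise formula for q
  have hentry : ∀ i j, L.q k i j = L.p k * ∑ σ : Equiv.Perm (Fin n),
      c σ * (if σ i = j then (1:ℝ) else 0) := by
    intro i j
    have hthis := congrFun (congrFun hcD i) j
    rw [Matrix.sum_apply] at hthis
    have hperm : ∀ σ : Equiv.Perm (Fin n),
        (c σ • σ.permMatrix ℝ) i j = c σ * (if σ i = j then (1:ℝ) else 0) := by
      intro σ; simp [Equiv.Perm.permMatrix, PEquiv.toMatrix, Equiv.toPEquiv]
    rw [Finset.sum_congr rfl (fun σ _ => hperm σ)] at hthis
    have hDij : D i j = L.q k i j / L.p k := rfl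
    rw [hthis, hDij]
    field_simp
  -- the core termwise claim
  have key : ∀ σ : Equiv.Perm (Fin n), 0 < c σ →
      ((u k l (σ h) : ℚ) : ℝ) ≤ ((u k l (σ l) : ℚ) : ℝ) := by
    intro σ hcσ
    by_contra hAc
    push_neg at hAc
    have hAq : u k l (σ l) < u k l (σ h) := by exact_mod_cast hAc
    -- build the swapped lottery
    set τ : Equiv.Perm (Fin n) := (Equiv.swap l h).trans σ with hτ
    have hτl : τ l = σ h := by simp [hτ]
    have hτh : τ h = σ l := by simp [hτ]
    have hτo : ∀ i, i ≠ l → i ≠ h → τ i = σ i := by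
      intro i h1 h2; simp [hτ, Equiv.swap_apply_of_ne_of_ne h1 h2]
    set δ : ℝ := c σ * L.p k with hδdef
    have hδ : 0 < δ := mul_pos hcσ hp
    have hlow : ∀ i j, δ * (if σ i = j then 1 else 0) ≤ L.q k i j := by
      intro i j
      rw [hentry i j, hδdef, mul_comm (c σ) (L.p k), mul_assoc]
      refine mul_le_mul_of_nonneg_left ?_ hp.le
      exact Finset.single_le_sum (f := fun σ' => c σ' * (if σ' i = j then (1:ℝ) else 0))
        (fun σ' _ => mul_nonneg (hc0 σ') (by positivity)) (mem_univ σ)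
    obtain ⟨L', hL'⟩ := swap_lottery L k σ τ δ hδ.le hlow
    -- expected-utility change in L'
    have hdiff : ∀ i : Fin n, euQ u L' i i = euQ u L i i +
        δ * (((u k i (τ i) : ℚ) : ℝ) - ((u k i (σ i) : ℚ) : ℝ)) := by
      intro i
      unfold euQ eu
      have hterm : ∀ k', (∑ j, ((u k' i j : ℚ) : ℝ) * L'.q k' i j) =
          (∑ j, ((u k' i j : ℚ) : ℝ) * L.q k' i j) +
          (if k' = k then δ * (((u k i (τ i) : ℚ) : ℝ) - ((u k i (σ i) : ℚ) : ℝ)) else 0) := by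
        intro k'
        by_cases hk : k' = k
        · subst hk
          rw [if_pos rfl]
          have e1 : ∀ j, ((u k' i j : ℚ) : ℝ) * L'.q k' i j =
              ((u k' i j : ℚ) : ℝ) * L.q k' i j +
              δ * (((u k' i j : ℚ) : ℝ) * (if τ i = j then (1:ℝ) else 0) -
                   ((u k' i j : ℚ) : ℝ) * (if σ i = j then (1:ℝ) else 0)) := by
            intro j; rw [hL', if_pos rfl]; ring
          rw [Finset.sum_congr rfl (fun j _ => e1 j), Finset.sum_add_distrib,
            ← Finset.mul_sum, Finset.sum_sub_distrib]
          congr 2 <;> simp [mul_ite]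
        · rw [if_neg hk]
          rw [Finset.sum_congr rfl (fun j _ => by rw [hL', if_neg hk, add_zero])]
          ring
      rw [Finset.sum_congr rfl (fun k' _ => hterm k'), Finset.sum_add_distrib]
      simp
    -- use optimality of L
    have hopt' := hopt L'
    have hsum : ∑ i, w i * (δ * (((u k i (τ i) : ℚ) : ℝ) - ((u k i (σ i) : ℚ) : ℝ))) ≤ 0 := by
      have e : ∀ i, w i * euQ u L' i i = w i * euQ u L i i +
          w i * (δ * (((u k i (τ i) : ℚ) : ℝ) - ((u k i (σ i) : ℚ) : ℝ))) := by
        intro i; rw [hdiff i]; ring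
      rw [Finset.sum_congr rfl (fun i _ => e i), Finset.sum_add_distrib] at hopt'
      linarith
    -- only `l` and `h` contribute
    have hvanish : ∀ i ∈ Finset.univ, i ∉ ({l, h} : Finset (Fin n)) →
        w i * (δ * (((u k i (τ i) : ℚ) : ℝ) - ((u k i (σ i) : ℚ) : ℝ))) = 0 := by
      intro i _ hi
      simp only [Finset.mem_insert, Finset.mem_singleton, not_or] at hi
      rw [hτo i hi.1 hi.2]
      ring
    rw [← Finset.sum_subset (Finset.subset_univ ({l, h} : Finset (Fin n))) hvanish,
      Finset.sum_pair hlh, hτl, hτh] at hsum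
    -- extract the weighted inequality
    set A : ℝ := ((u k l (σ h) : ℚ) : ℝ) - ((u k l (σ l) : ℚ) : ℝ) with hA
    set B : ℝ := ((u k h (σ h) : ℚ) : ℝ) - ((u k h (σ l) : ℚ) : ℝ) with hB
    have hwA : w l * A ≤ w h * B := by
      have h1 : δ * (w l * A) ≤ δ * (w h * B) := by
        rw [hB]; ring_nf; ring_nf at hsum; linarith
      exact le_of_mul_le_mul_left h1 hδ
    have hApos : 0 < A := by rw [hA]; linarith
    have hBpos : 0 < B := by
      by_contra hB0
      push_neg at hB0
      have h2 : w h * B ≤ 0 := mul_nonpos_of_nonneg_of_nonpos (hw h).le hB0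
      have h3 : 0 < w l * A := mul_pos (hw l) hApos
      linarith
    have hBq : u k h (σ l) < u k h (σ h) := by
      have : (0:ℝ) < ((u k h (σ h) : ℚ) : ℝ) - ((u k h (σ l) : ℚ) : ℝ) := hBpos
      exact_mod_cast (by linarith : ((u k h (σ l) : ℚ) : ℝ) < ((u k h (σ h) : ℚ) : ℝ))
    -- A ≤ ρ B  (in ℝ, hence in ℚ)
    have hArB : A ≤ ((rho u : ℚ) : ℝ) * B := by
      have h1 : w h * B ≤ ((rho u : ℚ) : ℝ) * w l * B :=
        mul_le_mul_of_nonneg_right hwlh hBpos.le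
      have h2 : w l * A ≤ w l * (((rho u : ℚ) : ℝ) * B) := by nlinarith
      exact le_of_mul_le_mul_left h2 (hw l)
    have hAqrBq : u k l (σ h) - u k l (σ l) ≤ rho u * (u k h (σ h) - u k h (σ l)) := by
      have : ((u k l (σ h) - u k l (σ l) : ℚ) : ℝ) ≤
          ((rho u * (u k h (σ h) - u k h (σ l)) : ℚ) : ℝ) := by push_cast; rw [hA, hB] at hArB; push_cast at hArB; linarith
      exact_mod_cast this
    -- but ρ ≤ (1/2) (Aq / Bq)
    have hρle := rho_le_half_ratio u (k, l, h, σ l, σ h) hAq hBq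
    simp only at hρle
    set Aq : ℚ := u k l (σ h) - u k l (σ l) with hAqd
    set Bq : ℚ := u k h (σ h) - u k h (σ l) with hBqd
    have hAqpos : 0 < Aq := by rw [hAqd]; linarith
    have hBqpos : 0 < Bq := by rw [hBqd]; linarith
    have hchain : rho u * Bq ≤ (1/2) * (Aq / Bq) * Bq :=
      mul_le_mul_of_nonneg_right hρle hBqpos.le
    rw [mul_assoc, div_mul_cancel₀ _ hBqpos.ne'] at hchain
    nlinarith [hAqrBq, hchain, hAqpos]
  -- sum up over the Birkhoff decomposition
  have hlhs : ∀ i' : Fin n, ∑ j, ((u k l j : ℚ) : ℝ) * L.q k i' j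
      = L.p k * ∑ σ : Equiv.Perm (Fin n), c σ * ((u k l (σ i') : ℚ) : ℝ) := by
    intro i'
    calc ∑ j, ((u k l j : ℚ) : ℝ) * L.q k i' j
        = ∑ j, ∑ σ : Equiv.Perm (Fin n),
            L.p k * (c σ * (((u k l j : ℚ) : ℝ) * (if σ i' = j then 1 else 0))) := by
          refine Finset.sum_congr rfl fun j _ => ?_
          rw [hentry i' j, Finset.mul_sum, Finset.mul_sum]
          exact Finset.sum_congr rfl fun σ _ => by ring
      _ = ∑ σ : Equiv.Perm (Fin n), L.p k * (c σ * ((u k l (σ i') : ℚ) : ℝ)) := by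
          rw [Finset.sum_comm]
          refine Finset.sum_congr rfl fun σ _ => ?_
          rw [← Finset.mul_sum, ← Finset.mul_sum]
          congr 2
          simp [mul_ite]
      _ = _ := by rw [Finset.mul_sum]
  rw [hlhs l, hlhs h]
  refine mul_le_mul_of_nonneg_left (Finset.sum_le_sum fun σ _ => ?_) hp.le
  rcases eq_or_lt_of_le (hc0 σ) with hc | hc
  · rw [← hc]; simp
  · exact mul_le_mul_of_nonneg_left (key σ hc) hc.le
end

section
/- Suppose q is a lottery and w ∈ W_ε are weights (∑_i w_i = 1, w_i ≥ ε = ρ^n/n) such that (i) q maximizes ∑_i w_i u_i(q;i) over all lotteries, and (ii) for all l,h, if u_l(q;h) > u_l(q;l) then w_h ≤ ρ·w_l. Then q is ex-ante envy-free and Pareto-optimal. -/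
open Finset

lemma rho_pos {n m : ℕ} (u : Fin m → Fin n → Fin n → ℚ) : 0 < rho u := by
  simp only [rho]
  split
  · rename_i hJ
    have h1 : (0:ℚ) < (Finset.univ.filter (fun t : Fin m × Fin n × Fin n × Fin n × Fin n =>
        u t.1 t.2.1 t.2.2.2.1 < u t.1 t.2.1 t.2.2.2.2 ∧
        u t.1 t.2.2.1 t.2.2.2.1 < u t.1 t.2.2.1 t.2.2.2.2)).inf' hJ (fun t =>
        (u t.1 t.2.1 t.2.2.2.2 - u t.1 t.2.1 t.2.2.2.1) /
        (u t.1 t.2.2.1 t.2.2.2.2 - u t.1 t.2.2.1 t.2.2.2.1)) := by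
      rw [Finset.lt_inf'_iff]
      intro t ht
      simp only [Finset.mem_filter, Finset.mem_univ, true_and] at ht
      exact div_pos (by linarith [ht.1]) (by linarith [ht.2])
    linarith
  · norm_num

lemma rho_mul_lt {n m : ℕ} (u : Fin m → Fin n → Fin n → ℚ) (k : Fin m) (l h a b : Fin n)
    (hl : u k l a < u k l b) (hh : u k h a < u k h b) :
    rho u * (u k h b - u k h a) < u k l b - u k l a := by
  set J : Finset (Fin m × Fin n × Fin n × Fin n × Fin n) :=
    Finset.univ.filter (fun t =>
      u t.1 t.2.1 t.2.2.2.1 < u t.1 t.2.1 t.2.2.2.2 ∧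
      u t.1 t.2.2.1 t.2.2.2.1 < u t.1 t.2.2.1 t.2.2.2.2) with hJdef
  set f : Fin m × Fin n × Fin n × Fin n × Fin n → ℚ := fun t =>
      (u t.1 t.2.1 t.2.2.2.2 - u t.1 t.2.1 t.2.2.2.1) /
      (u t.1 t.2.2.1 t.2.2.2.2 - u t.1 t.2.2.1 t.2.2.2.1) with hfdef
  have hmem : (⟨k, l, h, a, b⟩ : Fin m × Fin n × Fin n × Fin n × Fin n) ∈ J := by
    simp only [hJdef, Finset.mem_filter, Finset.mem_univ, true_and]
    exact ⟨hl, hh⟩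
  have hJ : J.Nonempty := ⟨_, hmem⟩
  have hrho : rho u = 1/2 * J.inf' hJ f := by
    simp only [rho]
    rw [dif_pos hJ]
  have hle : J.inf' hJ f ≤ f ⟨k, l, h, a, b⟩ := Finset.inf'_le _ hmem
  have hft : f ⟨k, l, h, a, b⟩ = (u k l b - u k l a) / (u k h b - u k h a) := rfl
  have hhpos : (0:ℚ) < u k h b - u k h a := by linarith
  have hlpos : (0:ℚ) < u k l b - u k l a := by linarith
  have key : (u k l b - u k l a) / (u k h b - u k h a) * (u k h b - u k h a)
      = u k l b - u k l a := div_mul_cancel₀ _ (ne_of_gt hhpos)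
  have h2 : rho u * (u k h b - u k h a) ≤ 1/2 * ((u k l b - u k l a) / (u k h b - u k h a)) * (u k h b - u k h a) := by
    rw [hrho]
    apply mul_le_mul_of_nonneg_right _ hhpos.le
    apply mul_le_mul_of_nonneg_left _ (by norm_num)
    rw [← hft]; exact hle
  have h3 : (1:ℚ)/2 * ((u k l b - u k l a) / (u k h b - u k h a)) * (u k h b - u k h a)
      = (u k l b - u k l a) / 2 := by
    rw [mul_assoc, key]; ring
  rw [h3] at h2
  linarith

lemma exists_support_min {n : ℕ} (v q : Fin n → ℝ) (hq : ∀ j, 0 ≤ q j) (p : ℝ)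
    (hp : 0 < p) (hsum : ∑ j, q j = p) :
    ∃ a, 0 < q a ∧ v a * p ≤ ∑ j, v j * q j := by
  have hsne : (Finset.univ.filter (fun j => 0 < q j)).Nonempty := by
    by_contra hs
    rw [Finset.not_nonempty_iff_eq_empty, Finset.filter_eq_empty_iff] at hs
    have : ∑ j, q j = 0 := Finset.sum_eq_zero (fun j _ => le_antisymm (not_lt.1 (hs (mem_univ j))) (hq j))
    rw [hsum] at this; linarith
  obtain ⟨a, ha, hmin⟩ := Finset.exists_min_image _ v hsne
  simp only [Finset.mem_filter, Finset.mem_univ, true_and] at ha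
  refine ⟨a, ha, ?_⟩
  calc v a * p = ∑ j, v a * q j := by rw [← Finset.mul_sum, hsum]
    _ ≤ ∑ j, v j * q j := by
        apply Finset.sum_le_sum
        intro j _
        rcases lt_or_eq_of_le (hq j) with hj | hj
        · exact mul_le_mul_of_nonneg_right (hmin j (by simp [hj])) hj.le
        · rw [← hj, mul_zero, mul_zero]

lemma exists_support_max {n : ℕ} (v q : Fin n → ℝ) (hq : ∀ j, 0 ≤ q j) (p : ℝ)
    (hp : 0 < p) (hsum : ∑ j, q j = p) :
    ∃ b, 0 < q b ∧ ∑ j, v j * q j ≤ v b * p := by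
  obtain ⟨b, hb, hle⟩ := exists_support_min (fun j => -v j) q hq p hp hsum
  refine ⟨b, hb, ?_⟩
  simp only [neg_mul] at hle
  rw [Finset.sum_neg_distrib] at hle
  linarith

/-- The perturbation matrix: move `δ` of agent `l`'s mass from bundle `a` to
bundle `b` in partition `k0`, and `δ` of agent `h`'s mass from `b` to `a`. -/
def Dp {n m : ℕ} (k0 : Fin m) (l h a b : Fin n) (δ : ℝ) (k : Fin m) (i j : Fin n) : ℝ :=
  if k = k0 then
    (((if i = l then (1:ℝ) else 0) - if i = h then 1 else 0) *
     ((if j = b then (1:ℝ) else 0) - if j = a then 1 else 0)) * δ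
  else 0

lemma perturb {n m : ℕ} (L : Lottery n m) (k0 : Fin m) (l h a b : Fin n)
    (hlh : l ≠ h) (hab : a ≠ b) (δ : ℝ) (hδ0 : 0 ≤ δ)
    (hδ1 : δ ≤ L.q k0 l a) (hδ2 : δ ≤ L.q k0 h b) :
    ∃ L' : Lottery n m, ∀ (w : Fin n → ℝ) (u : Fin m → Fin n → Fin n → ℝ),
      ∑ i, w i * eu u L' i i =
        ∑ i, w i * eu u L i i +
          (w l * (u k0 l b - u k0 l a) - w h * (u k0 h b - u k0 h a)) * δ := by
  have hrow : ∀ k i, ∑ j, Dp k0 l h a b δ k i j = 0 := by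
    intro k i
    by_cases hk : k = k0 <;> by_cases hi1 : i = l <;> by_cases hi2 : i = h <;>
      simp [Dp, hk, hi1, hi2, mul_sub, sub_mul, mul_ite, ite_mul,
        Finset.sum_sub_distrib, hab, hlh]
  have hcol : ∀ k j, ∑ i, Dp k0 l h a b δ k i j = 0 := by
    intro k j
    by_cases hk : k = k0 <;> by_cases hj1 : j = b <;> by_cases hj2 : j = a <;>
      simp [Dp, hk, hj1, hj2, mul_sub, sub_mul, mul_ite, ite_mul,
        Finset.sum_sub_distrib, hab, hlh]
  refine ⟨⟨fun k i j => L.q k i j + Dp k0 l h a b δ k i j, L.p, ?_, L.p_nonneg, ?_, ?_, L.total⟩, ?_⟩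
  · intro k i j
    have hq := L.q_nonneg k i j
    simp only [Dp]
    split_ifs <;> subst_vars <;> nlinarith [hδ0, hδ1, hδ2, hq]
  · intro k j
    simp only [Finset.sum_add_distrib, hcol, add_zero, L.col_sum]
  · intro k i
    simp only [Finset.sum_add_distrib, hrow, add_zero, L.row_sum]
  · intro w u
    have hinner : ∀ (i : Fin n) (k : Fin m), ∑ j, u k i j * Dp k0 l h a b δ k i j =
        (if k = k0 then ((if i = l then (1:ℝ) else 0) - if i = h then 1 else 0) * ((u k0 i b - u k0 i a) * δ) else 0) := by
      intro i k
      by_cases hk : k = k0 <;> by_cases hi1 : i = l <;> by_cases hi2 : i = h <;>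
        simp [Dp, hk, hi1, hi2, mul_sub, sub_mul, mul_ite, ite_mul,
          Finset.sum_sub_distrib, hab, hlh, Ne.symm hab, Ne.symm hlh,
          Finset.sum_ite_eq', mul_comm]
    have key2 : ∀ i : Fin n, ∑ k, ∑ j, u k i j * Dp k0 l h a b δ k i j =
        ((if i = l then (1:ℝ) else 0) - if i = h then 1 else 0) * ((u k0 i b - u k0 i a) * δ) := by
      intro i
      simp only [hinner, Finset.sum_ite_eq', Finset.mem_univ, if_true]
    have hthis : ∀ i : Fin n, w i * (((if i = l then (1:ℝ) else 0) - if i = h then 1 else 0) * ((u k0 i b - u k0 i a) * δ))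
        = (if i = l then w i * ((u k0 i b - u k0 i a) * δ) else 0)
          - (if i = h then w i * ((u k0 i b - u k0 i a) * δ) else 0) := by
      intro i
      by_cases hi1 : i = l <;> by_cases hi2 : i = h <;>
        simp [hi1, hi2, hlh, Ne.symm hlh]
    have hsum2 : ∑ i, w i * (((if i = l then (1:ℝ) else 0) - if i = h then 1 else 0) *
        ((u k0 i b - u k0 i a) * δ))
        = (w l * (u k0 l b - u k0 l a) - w h * (u k0 h b - u k0 h a)) * δ := by
      simp only [hthis, Finset.sum_sub_distrib, Finset.sum_ite_eq', Finset.mem_univ, if_true]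
      ring
    simp only [eu, mul_add, Finset.sum_add_distrib, key2]
    rw [hsum2]

/-- fixed point formulation: if `w ∈ W_ε` (with `ε = ρ^n/n`),
`q` maximizes the `w`-weighted sum of utilities, and `w h ≤ ρ * w l` whenever
`l` envies `h`, then `q` is ex-ante envy-free and Pareto-optimal. -/
theorem fixed_point_gives_ef_and_po {n m : ℕ} (u : Fin m → Fin n → Fin n → ℚ)
    (w : Fin n → ℝ) (L : Lottery n m)
    (hw_sum : ∑ i, w i = 1)
    (hw_lb : ∀ i, ((rho u : ℚ) : ℝ) ^ n / n ≤ w i)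
    (hopt : ∀ L' : Lottery n m, ∑ i, w i * euQ u L' i i ≤ ∑ i, w i * euQ u L i i)
    (hcond : ∀ l h, euQ u L l l < euQ u L l h → w h ≤ ((rho u : ℚ) : ℝ) * w l) :
    (∀ i i', euQ u L i i' ≤ euQ u L i i) ∧
      ParetoOptimal (fun k a b => ((u k a b : ℚ) : ℝ)) L := by
  have hρ : (0:ℚ) < rho u := rho_pos u
  have hρR : (0:ℝ) < ((rho u : ℚ) : ℝ) := by exact_mod_cast hρ
  have hwpos : ∀ i : Fin n, 0 < w i := by
    intro i
    have hn : 0 < n := i.pos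
    have : (0:ℝ) < ((rho u : ℚ) : ℝ) ^ n / n := by positivity
    exact lt_of_lt_of_le this (hw_lb i)
  have hEF : ∀ l h, euQ u L l l < euQ u L l h → False := by
    intro l h henvy
    have hlh : l ≠ h := by rintro rfl; exact lt_irrefl _ henvy
    have hwh := hcond l h henvy
    have henvy' : ∑ k, ∑ j, ((u k l j : ℚ) : ℝ) * L.q k l j <
        ∑ k, ∑ j, ((u k l j : ℚ) : ℝ) * L.q k h j := henvy
    obtain ⟨k0, -, hk0⟩ := Finset.exists_lt_of_sum_lt henvy'
    have hp : 0 < L.p k0 := by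
      rcases lt_or_eq_of_le (L.p_nonneg k0) with hp | hp
      · exact hp
      · exfalso
        have hz : ∀ i j, L.q k0 i j = 0 := by
          intro i j
          have := L.row_sum k0 i
          rw [← hp] at this
          exact (Finset.sum_eq_zero_iff_of_nonneg (fun j _ => L.q_nonneg k0 i j)).1 this j (mem_univ j)
        simp only [hz, mul_zero, Finset.sum_const_zero, lt_irrefl] at hk0
    obtain ⟨a, ha, hA⟩ := exists_support_min (fun j => ((u k0 l j : ℚ) : ℝ)) (L.q k0 l)
      (fun j => L.q_nonneg k0 l j) (L.p k0) hp (L.row_sum k0 l)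
    obtain ⟨b, hb, hB⟩ := exists_support_max (fun j => ((u k0 l j : ℚ) : ℝ)) (L.q k0 h)
      (fun j => L.q_nonneg k0 h j) (L.p k0) hp (L.row_sum k0 h)
    have hvab : ((u k0 l a : ℚ) : ℝ) < ((u k0 l b : ℚ) : ℝ) := by
      have := lt_of_le_of_lt hA (lt_of_lt_of_le hk0 hB)
      exact lt_of_mul_lt_mul_right this hp.le
    have hab : a ≠ b := by rintro rfl; exact lt_irrefl _ hvab
    have hQab : u k0 l a < u k0 l b := by exact_mod_cast hvab
    set δ : ℝ := min (L.q k0 l a) (L.q k0 h b) with hδdef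
    have hδpos : 0 < δ := lt_min ha hb
    obtain ⟨L', hL'⟩ := perturb L k0 l h a b hlh hab δ hδpos.le (min_le_left _ _) (min_le_right _ _)
    have hid := hL' w (fun k a b => ((u k a b : ℚ) : ℝ))
    have hle := hopt L'
    unfold euQ at hle
    rw [hid] at hle
    have hmain : 0 < w l * (((u k0 l b : ℚ) : ℝ) - ((u k0 l a : ℚ) : ℝ)) -
        w h * (((u k0 h b : ℚ) : ℝ) - ((u k0 h a : ℚ) : ℝ)) := by
      by_cases hh : u k0 h a < u k0 h b
      · have hkey : rho u * (u k0 h b - u k0 h a) < u k0 l b - u k0 l a :=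
          rho_mul_lt u k0 l h a b hQab hh
        have hkeyR : ((rho u : ℚ) : ℝ) * (((u k0 h b : ℚ) : ℝ) - ((u k0 h a : ℚ) : ℝ)) <
            ((u k0 l b : ℚ) : ℝ) - ((u k0 l a : ℚ) : ℝ) := by exact_mod_cast hkey
        have hhR : (0:ℝ) < ((u k0 h b : ℚ) : ℝ) - ((u k0 h a : ℚ) : ℝ) := by
          have : (0:ℚ) < u k0 h b - u k0 h a := by linarith
          exact_mod_cast this
        nlinarith [hwpos l, hwpos h, mul_le_mul_of_nonneg_right hwh hhR.le,
          mul_lt_mul_of_pos_left hkeyR (hwpos l)]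
      · have hhR : ((u k0 h b : ℚ) : ℝ) - ((u k0 h a : ℚ) : ℝ) ≤ 0 := by
          have : u k0 h b - u k0 h a ≤ 0 := by
            push_neg at hh; linarith
          exact_mod_cast this
        have hlR : (0:ℝ) < ((u k0 l b : ℚ) : ℝ) - ((u k0 l a : ℚ) : ℝ) := by linarith
        nlinarith [hwpos l, hwpos h]
    nlinarith [hmain, hδpos]
  constructor
  · intro i i'
    by_contra hc
    exact hEF i i' (lt_of_not_ge hc)
  · rintro ⟨L', hle, i0, hlt⟩
    have hstrict : ∑ i, w i * euQ u L i i < ∑ i, w i * euQ u L' i i := by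
      apply Finset.sum_lt_sum
      · intro i _
        exact mul_le_mul_of_nonneg_left (hle i) (hwpos i).le
      · exact ⟨i0, mem_univ i0, mul_lt_mul_of_pos_left hlt (hwpos i0)⟩
    exact absurd (hopt L') (not_le.2 hstrict)
end
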